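/- arXiv:1908.07145 — 2 statements merged into one kernel-verified Lean document; each statement's English description precedes it below -/
import Mathlib

section
/- Let ρ ∈ (−1,1) and let μ_ρ be the probability measure on ℝ² with density p_{0,ρ}(x,y) = (2π√(1−ρ²))⁻¹ exp(−(x²−2ρxy+y²)/(2(1−ρ²))) with respect to Lebesgue measure. Then for all real s and t, the characteristic function φ(s,t) = ∫_{ℝ²} exp(i(s x² + t y²)) dμ_ρ(x,y) satisfies φ(s,t)² = (1−ρ²) / ((1−2is(1−ρ²))(1−2it(1−ρ²)) − ρ²), where i is the imaginary unit. -/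
open MeasureTheory

/-- The density `p_{0,ρ}` of the two-dimensional normal distribution with standard normal
marginals and correlation coefficient `ρ`. -/
noncomputable def binormalDensity (ρ : ℝ) (p : ℝ × ℝ) : ℝ :=
  1 / (2 * Real.pi * Real.sqrt (1 - ρ ^ 2))
    * Real.exp (-(p.1 ^ 2 - 2 * ρ * p.1 * p.2 + p.2 ^ 2) / (2 * (1 - ρ ^ 2)))

/-!
Multiplying the density by `exp(i(s x² + t y²))` gives `C · exp(a x² + c x y + b y²)` with
`a = i s - 1/(2(1-ρ²))`, `b = i t - 1/(2(1-ρ²))`, `c = ρ/(1-ρ²)`, whose real part is a negative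
definite form. Integrating first in `y` and then in `x` with the one-dimensional complex Gaussian
integral (completing the square each time) gives `(π / -b)^(1/2) (π / -(a - c²/(4b)))^(1/2)`.
The branches of the square roots disappear on squaring, leaving `π² / (ab - c²/4)`, that is
`π² / det A` for the symmetric matrix `A` of the form.
-/

open Complex Real

lemma exists_quadratic_le_neg_mul_add_sq {α β γ : ℝ} (hα : α < 0) (hβ : β < 0)
    (hγ : γ ^ 2 < 4 * α * β) :
    ∃ ε > 0, ∀ x y : ℝ, α * x ^ 2 + γ * x * y + β * y ^ 2 ≤ -ε * (x ^ 2 + y ^ 2) := by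
  -- `ε = det M / tr M` for the positive definite matrix `M` of the negated form, so that
  -- `M - ε • 1` has positive diagonal and determinant `ε²`.
  set ε := (α * β - γ ^ 2 / 4) / (-α - β)
  have hε : 0 < ε := div_pos (by linarith) (by linarith)
  have hA : 0 < -α - ε := by
    rw [sub_pos, div_lt_iff₀ (by linarith)]
    nlinarith
  have hdet : (-α - ε) * (-β - ε) = γ ^ 2 / 4 + ε ^ 2 := by
    have : -α - β ≠ 0 := by linarith
    simp only [ε]
    field_simp
    ring
  refine ⟨ε, hε, fun x y => ?_⟩
  have h : 0 ≤ (-α - ε) * ((-α - ε) * x ^ 2 - γ * x * y + (-β - ε) * y ^ 2) := by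
    nlinarith [sq_nonneg ((-α - ε) * x - γ * y / 2), sq_nonneg (ε * y)]
  nlinarith [nonneg_of_mul_nonneg_right h hA]

lemma integrable_cexp_quadratic_prod {a b c : ℂ} (ha : a.re < 0) (hb : b.re < 0)
    (hc : ‖c‖ ^ 2 < 4 * a.re * b.re) :
    Integrable (fun p : ℝ × ℝ => cexp (a * p.1 ^ 2 + c * p.1 * p.2 + b * p.2 ^ 2)) := by
  have hγ : c.re ^ 2 < 4 * a.re * b.re := by
    nlinarith [Complex.sq_norm c, Complex.normSq_apply c, sq_nonneg c.im]
  obtain ⟨ε, hε, hle⟩ := exists_quadratic_le_neg_mul_add_sq ha hb hγ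
  refine ((integrable_exp_neg_mul_sq hε).mul_prod (integrable_exp_neg_mul_sq hε)).mono'
    (by fun_prop) (Filter.Eventually.of_forall fun p => ?_)
  rw [norm_exp, ← Real.exp_add]
  gcongr
  simp only [add_re, mul_re, ← ofReal_pow, ofReal_re, ofReal_im]
  nlinarith [hle p.1 p.2]

lemma re_sub_sq_div_neg {a b c : ℂ} (hb : b.re < 0)
    (hc : ‖c‖ ^ 2 < 4 * a.re * b.re) : (a - c ^ 2 / (4 * b)).re < 0 := by
  have hb0 : 0 < ‖b‖ := norm_pos_iff.mpr fun h => by simp [h] at hb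
  have hbre : -b.re ≤ ‖b‖ := by simpa using re_le_norm (-b)
  calc (a - c ^ 2 / (4 * b)).re ≤ a.re + ‖c ^ 2 / (4 * b)‖ := by
        rw [sub_re]; linarith [neg_le_of_abs_le (abs_re_le_norm (c ^ 2 / (4 * b)))]
    _ = a.re + ‖c‖ ^ 2 / (4 * ‖b‖) := by simp [norm_pow]
    _ ≤ a.re + ‖c‖ ^ 2 / (4 * -b.re) := by gcongr; linarith
    _ < 0 := by
        have : ‖c‖ ^ 2 / (4 * -b.re) < -a.re := by rw [div_lt_iff₀ (by linarith)]; linarith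
        linarith

lemma integral_cexp_quadratic_prod {a b c : ℂ} (ha : a.re < 0) (hb : b.re < 0)
    (hc : ‖c‖ ^ 2 < 4 * a.re * b.re) :
    ∫ p : ℝ × ℝ, cexp (a * p.1 ^ 2 + c * p.1 * p.2 + b * p.2 ^ 2)
      = (π / -b) ^ (1 / 2 : ℂ) * (π / -(a - c ^ 2 / (4 * b))) ^ (1 / 2 : ℂ) := by
  have inner (x : ℝ) : ∫ y : ℝ, cexp (a * x ^ 2 + c * x * y + b * y ^ 2)
      = (π / -b) ^ (1 / 2 : ℂ) * cexp ((a - c ^ 2 / (4 * b)) * x ^ 2 + 0 * x + 0) := by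
    calc ∫ y : ℝ, cexp (a * x ^ 2 + c * x * y + b * y ^ 2)
        _ = ∫ y : ℝ, cexp (b * y ^ 2 + c * x * y + a * x ^ 2) := by
          congr 1 with y; ring_nf
        _ = (π / -b) ^ (1 / 2 : ℂ) * cexp (a * x ^ 2 - (c * x) ^ 2 / (4 * b)) :=
          integral_cexp_quadratic hb _ _
        _ = _ := by ring_nf
  rw [Measure.volume_eq_prod, integral_prod _ (integrable_cexp_quadratic_prod ha hb hc)]
  simp only [inner, integral_const_mul, integral_cexp_quadratic (re_sub_sq_div_neg hb hc)]
  simp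

lemma sq_integral_cexp_quadratic_prod {a b c : ℂ} (ha : a.re < 0) (hb : b.re < 0)
    (hc : ‖c‖ ^ 2 < 4 * a.re * b.re) :
    (∫ p : ℝ × ℝ, cexp (a * p.1 ^ 2 + c * p.1 * p.2 + b * p.2 ^ 2)) ^ 2
      = π ^ 2 / (a * b - c ^ 2 / 4) := by
  have hb0 : b ≠ 0 := fun h => by simp [h] at hb
  have hd0 : a - c ^ 2 / (4 * b) ≠ 0 := fun h => by
    simpa [h] using re_sub_sq_div_neg hb hc
  rw [integral_cexp_quadratic_prod ha hb hc, mul_pow, one_div, cpow_ofNat_inv_pow,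
    cpow_ofNat_inv_pow]
  field_simp

lemma integral_withDensity_ofReal_eq_integral_smul {X E : Type*} [MeasurableSpace X]
    [NormedAddCommGroup E] [NormedSpace ℝ E] {μ : Measure X} {f : X → ℝ} (hf : Measurable f)
    (hf0 : ∀ x, 0 ≤ f x) (g : X → E) :
    ∫ x, g x ∂μ.withDensity (fun x => ENNReal.ofReal (f x)) = ∫ x, f x • g x ∂μ := by
  rw [integral_withDensity_eq_integral_toReal_smul hf.ennreal_ofReal
    (Filter.Eventually.of_forall fun _ => ENNReal.ofReal_lt_top)]
  simp only [ENNReal.toReal_ofReal (hf0 _)]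

lemma continuous_binormalDensity (ρ : ℝ) : Continuous (binormalDensity ρ) := by
  unfold binormalDensity; fun_prop

lemma binormalDensity_nonneg (ρ : ℝ) (p : ℝ × ℝ) : 0 ≤ binormalDensity ρ p := by
  unfold binormalDensity; positivity

lemma binormalDensity_mul_cexp (ρ s t : ℝ) (p : ℝ × ℝ) :
    binormalDensity ρ p * cexp (I * (s * p.1 ^ 2 + t * p.2 ^ 2))
      = ((2 * π * √(1 - ρ ^ 2))⁻¹ : ℝ)
        * cexp ((I * s - ((2 * (1 - ρ ^ 2))⁻¹ : ℝ)) * p.1 ^ 2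
          + ((ρ / (1 - ρ ^ 2) : ℝ) : ℂ) * p.1 * p.2
          + (I * t - ((2 * (1 - ρ ^ 2))⁻¹ : ℝ)) * p.2 ^ 2) := by
  rw [binormalDensity, ofReal_mul, ofReal_exp, mul_assoc, ← Complex.exp_add, one_div]
  congr 2
  push_cast
  simp only [div_eq_mul_inv, mul_inv]
  ring

lemma re_binormal_coeff_neg {ρ : ℝ} (hρ : ρ ^ 2 < 1) (r : ℝ) :
    (I * r - ((2 * (1 - ρ ^ 2))⁻¹ : ℝ)).re < 0 := by
  have hσ : 0 < 1 - ρ ^ 2 := by linarith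
  simpa only [sub_re, mul_re, I_re, I_im, ofReal_re, ofReal_im, zero_mul, one_mul, sub_zero,
    zero_sub, neg_lt_zero] using inv_pos.mpr (mul_pos two_pos hσ)

lemma norm_sq_binormal_cross_coeff_lt {ρ : ℝ} (hρ : ρ ^ 2 < 1) (s t : ℝ) :
    ‖((ρ / (1 - ρ ^ 2) : ℝ) : ℂ)‖ ^ 2
      < 4 * (I * s - ((2 * (1 - ρ ^ 2))⁻¹ : ℝ)).re * (I * t - ((2 * (1 - ρ ^ 2))⁻¹ : ℝ)).re := by
  have hσ : 0 < 1 - ρ ^ 2 := by linarith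
  simp only [sub_re, mul_re, I_re, I_im, ofReal_re, ofReal_im, zero_mul, one_mul, sub_zero,
    zero_sub, norm_real, Real.norm_eq_abs, sq_abs]
  field_simp
  nlinarith

lemma binormal_coeff_det {ρ : ℝ} (hρ : ρ ^ 2 < 1) (s t : ℝ) :
    (I * s - ((2 * (1 - ρ ^ 2))⁻¹ : ℝ)) * (I * t - ((2 * (1 - ρ ^ 2))⁻¹ : ℝ))
        - ((ρ / (1 - ρ ^ 2) : ℝ) : ℂ) ^ 2 / 4
      = ((1 - 2 * I * s * (1 - (ρ : ℂ) ^ 2)) * (1 - 2 * I * t * (1 - (ρ : ℂ) ^ 2)) - (ρ : ℂ) ^ 2)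
        / (4 * (1 - (ρ : ℂ) ^ 2) ^ 2) := by
  have hσ : (1 - (ρ : ℂ) ^ 2) ≠ 0 := by exact_mod_cast (sub_pos.mpr hρ).ne'
  push_cast
  field_simp
  ring

/-- The characteristic function `φ(s,t) = E[exp(i(s x² + t y²))]` of `(x², y²)` under the
two-dimensional normal distribution with density `p_{0,ρ}` satisfies
`φ(s,t)² = (1-ρ²)/((1-2is(1-ρ²))(1-2it(1-ρ²)) - ρ²)`. -/
theorem char_fun_sq_of_binormal (ρ : ℝ) (hρ1 : -1 < ρ) (hρ2 : ρ < 1) (s t : ℝ) :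
    (∫ p : ℝ × ℝ, Complex.exp (Complex.I * ((s : ℂ) * (p.1 : ℂ) ^ 2 + (t : ℂ) * (p.2 : ℂ) ^ 2))
        ∂((volume : Measure (ℝ × ℝ)).withDensity
            (fun p => ENNReal.ofReal (binormalDensity ρ p)))) ^ 2
      = (1 - (ρ : ℂ) ^ 2)
        / ((1 - 2 * Complex.I * (s : ℂ) * (1 - (ρ : ℂ) ^ 2))
            * (1 - 2 * Complex.I * (t : ℂ) * (1 - (ρ : ℂ) ^ 2)) - (ρ : ℂ) ^ 2) := by
  have hρ : ρ ^ 2 < 1 := by nlinarith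
  have hσ : (1 - (ρ : ℂ) ^ 2) ≠ 0 := by exact_mod_cast (sub_pos.mpr hρ).ne'
  have hC : (((2 * π * √(1 - ρ ^ 2))⁻¹ : ℝ) : ℂ) ^ 2 = (4 * π ^ 2 * (1 - (ρ : ℂ) ^ 2))⁻¹ := by
    rw [← ofReal_pow, inv_pow, mul_pow, mul_pow, Real.sq_sqrt (sub_pos.mpr hρ).le]
    push_cast
    ring
  rw [integral_withDensity_ofReal_eq_integral_smul (continuous_binormalDensity ρ).measurable
    (binormalDensity_nonneg ρ)]
  simp only [real_smul, binormalDensity_mul_cexp]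
  rw [integral_const_mul, mul_pow, sq_integral_cexp_quadratic_prod (re_binormal_coeff_neg hρ s)
    (re_binormal_coeff_neg hρ t) (norm_sq_binormal_cross_coeff_lt hρ s t),
    binormal_coeff_det hρ, hC, div_div_eq_mul_div, ← mul_div_assoc]
  congr 1
  field_simp
end

section
/- Let m ≥ 2 and let B be any finite bit string. Let c⁽¹⁾ be the number of occurrences in B of the m-bit pattern consisting of a 1 followed by m−1 zeros, and let c⁽²⁾ be the number of occurrences in B of the m-bit pattern consisting of m−1 zeros followed by a 1. Then |c⁽¹⁾ − c⁽²⁾| ≤ 1. -/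
open scoped Classical

/-- `T` occurs in the block `B` at position `k`: `B (k+i) = T i` for all `i < m`. -/
def occursAt {m M : ℕ} (T : Fin m → Bool) (B : Fin M → Bool) (k : ℕ) : Prop :=
  ∀ i : Fin m, ∀ h : k + i.1 < M, B ⟨k + i.1, h⟩ = T i

/-- The number of occurrences of the template `T` in the block `B`. -/
noncomputable def occCount {m M : ℕ} (T : Fin m → Bool) (B : Fin M → Bool) : ℕ :=
  ((Finset.range (M + 1 - m)).filter (fun k => occursAt T B k)).card

/-!
Occurrences of `1 0 ⋯ 0` and of `0 ⋯ 0 1` strictly interleave: after an occurrence of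
`1 0 ⋯ 0` at `k`, the first later one closes a run of at least `m - 1` zeros, which ends in an
occurrence of `0 ⋯ 0 1` before the next occurrence of `1 0 ⋯ 0`; symmetrically, the last one
before an occurrence of `0 ⋯ 0 1` starts an occurrence of `1 0 ⋯ 0` after the previous
occurrence of `0 ⋯ 0 1`. Two strictly interleaving finite sets of a linear order differ in size
by at most 1.
-/

open Finset

theorem Finset.card_le_card_add_one_of_forall_exists_between {α : Type*} [LinearOrder α]
    {s t : Finset α} (h : ∀ a ∈ s, ∀ b ∈ s, a < b → ∃ c ∈ t, a < c ∧ c < b) :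
    #s ≤ #t + 1 := by
  induction s using Finset.induction_on_max generalizing t with
  | empty => simp
  | insert a s hlt ih =>
    rcases s.eq_empty_or_nonempty with rfl | hs
    · simp
    obtain ⟨c, hct, hmc, -⟩ := h _ (mem_insert_of_mem (s.max'_mem hs)) a (mem_insert_self a s)
      (hlt _ (s.max'_mem hs))
    have hs_le : #s ≤ #(t.filter (· < c)) + 1 := ih fun x hx y hy hxy => by
      obtain ⟨d, hdt, hxd, hdy⟩ := h x (mem_insert_of_mem hx) y (mem_insert_of_mem hy) hxy
      exact ⟨d, mem_filter.2 ⟨hdt, hdy.trans ((s.le_max' y hy).trans_lt hmc)⟩, hxd, hdy⟩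
    have ht_lt : #(t.filter (· < c)) < #t :=
      card_lt_card (filter_ssubset.2 ⟨c, hct, lt_irrefl c⟩)
    rw [card_insert_of_notMem fun ha => lt_irrefl a (hlt a ha)]
    omega

section BitSequence

variable {m : ℕ} {b : ℕ → Bool}

theorem exists_zerosOne_between {k p : ℕ} (hk : ∀ i : Fin m, b (k + i) = decide (i.1 = 0))
    (hp : b p = true) (hkp : k < p) :
    ∃ j, k < j ∧ j + (m - 1) ≤ p ∧ ∀ i : Fin m, b (j + i) = decide (i.1 = m - 1) := by
  have hex : ∃ q, k < q ∧ b q = true := ⟨p, hkp, hp⟩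
  obtain ⟨hkq, hq⟩ := Nat.find_spec hex
  have hqp : Nat.find hex ≤ p := Nat.find_min' hex ⟨hkp, hp⟩
  have hzero : ∀ n, k < n → n < Nat.find hex → b n = false := fun n hkn hn => by
    simpa [hkn] using Nat.find_min hex hn
  have hkmq : k + m ≤ Nat.find hex := by
    by_contra! hlt
    have := hk ⟨Nat.find hex - k, by omega⟩
    simp only [Nat.add_sub_cancel' hkq.le, hq, true_eq_decide_iff] at this
    omega
  refine ⟨Nat.find hex - (m - 1), by omega, by omega, fun i => ?_⟩
  by_cases hi : i.1 = m - 1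
  · simpa [hi, Nat.sub_add_cancel (show m - 1 ≤ Nat.find hex by omega)] using hq
  · simpa [hi] using hzero _ (by omega) (by omega)

theorem exists_oneZeros_between {p j : ℕ} (hp : b p = true) (hpj : p < j)
    (hj : ∀ i : Fin m, b (j + i) = decide (i.1 = m - 1)) :
    ∃ q, p ≤ q ∧ q < j ∧ ∀ i : Fin m, b (q + i) = decide (i.1 = 0) := by
  set q := Nat.findGreatest (fun n => b n = true) (j - 1)
  have hpq : p ≤ q := Nat.le_findGreatest (by omega) hp
  have hqj : q < j := (Nat.findGreatest_le _).trans_lt (by omega)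
  refine ⟨q, hpq, hqj, fun i => ?_⟩
  by_cases hi : i.1 = 0
  · simpa [hi] using Nat.findGreatest_spec (P := fun n => b n = true) (by omega : p ≤ j - 1) hp
  by_cases hij : q + i < j
  · simpa [hi] using Nat.findGreatest_is_greatest (P := fun n => b n = true) (n := j - 1)
      (k := q + i) (by omega) (by omega)
  · have := hj ⟨q + i - j, by omega⟩
    rw [Nat.add_sub_cancel' (by omega)] at this
    simpa [hi, show q + i - j ≠ m - 1 by omega] using this

theorem zerosOne_separated {j j' : ℕ} (hj : ∀ i : Fin m, b (j + i) = decide (i.1 = m - 1))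
    (hj' : ∀ i : Fin m, b (j' + i) = decide (i.1 = m - 1)) (hjj' : j < j') :
    j + (m - 1) < j' := by
  by_contra! hle
  have hm : 0 < m := by omega
  have h1 : b (j + (m - 1)) = true := by simpa using hj ⟨m - 1, by omega⟩
  have h2 := hj' ⟨j + (m - 1) - j', by omega⟩
  rw [Nat.add_sub_cancel' hle] at h2
  simp only [h1, true_eq_decide_iff] at h2
  omega

end BitSequence

section Occurrences

variable {m M : ℕ}

def padded (B : Fin M → Bool) (n : ℕ) : Bool := if h : n < M then B ⟨n, h⟩ else false

noncomputable def occurrences (T : Fin m → Bool) (B : Fin M → Bool) : Finset ℕ :=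
  (range (M + 1 - m)).filter (occursAt T B)

theorem occCount_eq_card_occurrences (T : Fin m → Bool) (B : Fin M → Bool) :
    occCount T B = #(occurrences T B) := rfl

theorem mem_occurrences_iff {T : Fin m → Bool} {B : Fin M → Bool} {k : ℕ} :
    k ∈ occurrences T B ↔ k + m ≤ M ∧ ∀ i : Fin m, padded B (k + i) = T i := by
  simp only [occurrences, mem_filter, mem_range, occursAt, padded]
  constructor
  · rintro ⟨hk, h⟩
    exact ⟨by omega, fun i => by rw [dif_pos (by omega)]; exact h i _⟩
  · rintro ⟨hk, h⟩
    exact ⟨by omega, fun i hi => by simpa [dif_pos hi] using h i⟩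

end Occurrences

/-- The numbers of occurrences of the pattern `1 0 ⋯ 0` (a one followed by `m-1` zeros) and
of the pattern `0 ⋯ 0 1` (`m-1` zeros followed by a one) in any bit string differ by at most 1. -/
theorem paired_patterns_count_diff (m M : ℕ) (hm : 2 ≤ m) (B : Fin M → Bool) :
    |(occCount (fun i : Fin m => decide (i.1 = 0)) B : ℤ)
      - (occCount (fun i : Fin m => decide (i.1 = m - 1)) B : ℤ)| ≤ 1 := by
  have h₁ := card_le_card_add_one_of_forall_exists_between
    (s := occurrences (fun i : Fin m => decide (i.1 = 0)) B)
    (t := occurrences (fun i : Fin m => decide (i.1 = m - 1)) B) fun k hk k' hk' hkk' => by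
      rw [mem_occurrences_iff] at hk hk'
      obtain ⟨j, hkj, hjk', hj⟩ :=
        exists_zerosOne_between hk.2 (by simpa using hk'.2 ⟨0, by omega⟩) hkk'
      exact ⟨j, mem_occurrences_iff.2 ⟨by omega, hj⟩, hkj, by omega⟩
  have h₂ := card_le_card_add_one_of_forall_exists_between
    (s := occurrences (fun i : Fin m => decide (i.1 = m - 1)) B)
    (t := occurrences (fun i : Fin m => decide (i.1 = 0)) B) fun j hj j' hj' hjj' => by
      rw [mem_occurrences_iff] at hj hj'
      have hsep := zerosOne_separated hj.2 hj'.2 hjj'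
      obtain ⟨q, hjq, hqj', hq⟩ :=
        exists_oneZeros_between (by simpa using hj.2 ⟨m - 1, by omega⟩) hsep hj'.2
      exact ⟨q, mem_occurrences_iff.2 ⟨by omega, hq⟩, by omega, hqj'⟩
  rw [occCount_eq_card_occurrences, occCount_eq_card_occurrences, abs_le]
  omega
end
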